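/- arXiv:2505.10054 — 3 statements merged into one kernel-verified Lean document; each statement's English description precedes it below -/
import Mathlib

section
/- Let β > 0, E > 0, q = exp(−β·E), z_τ = (1−q)/(1+q). Let ρ be a 2×2 density matrix with z(ρ) = ρ_{00} − ρ_{11} ≠ z_τ and η(ρ) = |ρ_{01}|. Then for every energy-preserving unitary U indexed by (Fin 2) × (Fin 2) and every N ≥ 1, the output σ = T_U^N(ρ) satisfies: r := (z(σ) − z_τ)/(z(ρ) − z_τ) ∈ [0, 1], and z_τ^N · η(ρ) · √r ≤ η(σ) ≤ η(ρ) · √r, where η(σ) = |σ_{01}| and z(σ) = σ_{00} − σ_{11}. (Necessity direction of the paper's Theorem 1, Eq. (cone_qubit).) -/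
open Matrix
open scoped ComplexOrder

/-- The qubit collision channel: the system qubit interacts with a molecule qubit in the
Gibbs state diag(1/(1+q), q/(1+q)) via the joint unitary `U`, and the molecule is traced out. -/
noncomputable def collide (q : ℝ) (U : Matrix (Fin 2 × Fin 2) (Fin 2 × Fin 2) ℂ)
    (ρ : Matrix (Fin 2) (Fin 2) ℂ) : Matrix (Fin 2) (Fin 2) ℂ :=
  Matrix.of fun a b => ∑ c : Fin 2,
    (U * (Matrix.kroneckerMap (· * ·) ρ
        (Matrix.diagonal fun j : Fin 2 => ((q ^ (j : ℕ) / (1 + q) : ℝ) : ℂ))) * Uᴴ)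
      (a, c) (b, c)

/-!
Energy conservation makes `U` block diagonal in the excitation number. Hence one collision
multiplies the coherence `ρ₀₁` by a fixed factor `μ` and contracts the deviation of the
polarization from `z_τ` by `1 - s`, where `s` is the probability that the collision exchanges the
excitation. By unitarity `μ` is the Gibbs-weighted average, with weights `1/(1+q)` and `q/(1+q)`,
of two numbers of modulus `√(1 - s)`, so `z_τ √(1 - s) ≤ |μ| ≤ √(1 - s)`. After `N` collisions
`r = (1 - s)^N` and `|σ₀₁| = |μ|^N |ρ₀₁|`.
-/

open ComplexConjugate

theorem Matrix.apply_eq_zero_of_mul_diagonal_eq {n R : Type*} [Fintype n] [DecidableEq n]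
    [CommRing R] [NoZeroDivisors R] {U : Matrix n n R} {d : n → R}
    (h : U * diagonal d = diagonal d * U) {i j : n} (hij : d i ≠ d j) : U i j = 0 := by
  have hij' := congr_fun (congr_fun h i) j
  rw [mul_diagonal, diagonal_mul] at hij'
  have : U i j * (d j - d i) = 0 := by rw [mul_sub, hij', mul_comm, sub_self]
  exact (mul_eq_zero.mp this).resolve_right (sub_ne_zero.mpr hij.symm)

section UnitaryGroup

variable {n : Type*} [Fintype n] [DecidableEq n] {U : Matrix n n ℂ}

theorem Matrix.sum_sq_norm_apply_left_of_mem_unitaryGroup (hU : U ∈ unitaryGroup n ℂ) (j : n) :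
    ∑ i, ‖U i j‖ ^ 2 = 1 := by
  have h := congr_fun (congr_fun (mem_unitaryGroup_iff'.mp hU) j) j
  simp only [mul_apply, star_apply, RCLike.star_def, Complex.conj_mul', one_apply_eq] at h
  exact_mod_cast h

theorem Matrix.sum_sq_norm_apply_right_of_mem_unitaryGroup (hU : U ∈ unitaryGroup n ℂ) (i : n) :
    ∑ j, ‖U i j‖ ^ 2 = 1 := by
  have h := congr_fun (congr_fun (mem_unitaryGroup_iff.mp hU) i) i
  simp only [mul_apply, star_apply, RCLike.star_def, Complex.mul_conj', one_apply_eq] at h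
  exact_mod_cast h

end UnitaryGroup

namespace QubitCollision

def IsExcitationPreserving (U : Matrix (Fin 2 × Fin 2) (Fin 2 × Fin 2) ℂ) : Prop :=
  ∀ i j : Fin 2 × Fin 2, (i.1 : ℕ) + i.2 ≠ (j.1 : ℕ) + j.2 → U i j = 0

theorem isExcitationPreserving_of_commute {E : ℝ} (hE : E ≠ 0)
    {U : Matrix (Fin 2 × Fin 2) (Fin 2 × Fin 2) ℂ}
    (hcomm : U * Matrix.diagonal
        (fun ab : Fin 2 × Fin 2 => ((((ab.1 : ℕ) + (ab.2 : ℕ)) * E : ℝ) : ℂ))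
      = Matrix.diagonal
        (fun ab : Fin 2 × Fin 2 => ((((ab.1 : ℕ) + (ab.2 : ℕ)) * E : ℝ) : ℂ)) * U) :
    IsExcitationPreserving U := fun i j hij =>
  apply_eq_zero_of_mul_diagonal_eq hcomm <| by
    simp only [Ne, Complex.ofReal_inj, mul_left_inj' hE]
    exact_mod_cast hij

/-- The probability that a collision swaps the excitation between system and molecule. -/
noncomputable def transitionProb (U : Matrix (Fin 2 × Fin 2) (Fin 2 × Fin 2) ℂ) : ℝ :=
  ‖U (0,1) (1,0)‖ ^ 2

noncomputable def coherenceFactor (q : ℝ) (U : Matrix (Fin 2 × Fin 2) (Fin 2 × Fin 2) ℂ) : ℂ :=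
  (U (0,0) (0,0) * conj (U (1,0) (1,0)) + q * (U (0,1) (0,1) * conj (U (1,1) (1,1))))
    / ((1 + q : ℝ) : ℂ)

/-- The deviation of the polarization from its Gibbs value, made homogeneous in `M` by the trace
so that the collision channel scales it. -/
noncomputable def polarizationDeviation (q : ℝ) (M : Matrix (Fin 2) (Fin 2) ℂ) : ℝ :=
  (M 0 0 - M 1 1 - ((1 - q) / (1 + q) : ℝ) * M.trace).re

theorem polarizationDeviation_of_trace_eq_one {q : ℝ} {M : Matrix (Fin 2) (Fin 2) ℂ}
    (h : M.trace = 1) :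
    polarizationDeviation q M = (M 0 0).re - (M 1 1).re - (1 - q) / (1 + q) := by
  rw [polarizationDeviation, h, mul_one, Complex.sub_re, Complex.sub_re, Complex.ofReal_re]

variable {q : ℝ} {U : Matrix (Fin 2 × Fin 2) (Fin 2 × Fin 2) ℂ} (hU : IsExcitationPreserving U)
include hU

section Entries

variable (ρ : Matrix (Fin 2) (Fin 2) ℂ)

theorem collide_apply_zero_one : collide q U ρ 0 1 = coherenceFactor q U * ρ 0 1 := by
  rw [coherenceFactor]
  simp (disch := decide) only [collide, of_apply, mul_apply, kroneckerMap_apply,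
    conjTranspose_apply, RCLike.star_def, Fintype.sum_prod_type, Fin.sum_univ_two, diagonal_apply,
    hU _ _ _, Fin.isValue, zero_ne_one, one_ne_zero, ↓reduceIte, mul_zero, zero_mul, add_zero,
    zero_add, map_zero, Fin.val_zero, Fin.val_one]
  push_cast
  ring

theorem collide_apply_zero_zero : collide q U ρ 0 0 =
    (((‖U (0,0) (0,0)‖ ^ 2 : ℝ) + q * (‖U (0,1) (0,1)‖ ^ 2 : ℝ)) * ρ 0 0
      + (‖U (0,1) (1,0)‖ ^ 2 : ℝ) * ρ 1 1) / (1 + q) := by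
  simp only [Complex.ofReal_pow, ← Complex.mul_conj']
  simp (disch := decide) only [collide, of_apply, mul_apply, kroneckerMap_apply,
    conjTranspose_apply, RCLike.star_def, Fintype.sum_prod_type, Fin.sum_univ_two, diagonal_apply,
    hU _ _ _, Fin.isValue, zero_ne_one, one_ne_zero, ↓reduceIte, mul_zero, zero_mul, add_zero,
    zero_add, map_zero, Fin.val_zero, Fin.val_one]
  push_cast
  ring

theorem collide_apply_one_one : collide q U ρ 1 1 =
    (((‖U (1,0) (1,0)‖ ^ 2 : ℝ) + q * (‖U (1,1) (1,1)‖ ^ 2 : ℝ)) * ρ 1 1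
      + q * (‖U (1,0) (0,1)‖ ^ 2 : ℝ) * ρ 0 0) / (1 + q) := by
  simp only [Complex.ofReal_pow, ← Complex.mul_conj']
  simp (disch := decide) only [collide, of_apply, mul_apply, kroneckerMap_apply,
    conjTranspose_apply, RCLike.star_def, Fintype.sum_prod_type, Fin.sum_univ_two, diagonal_apply,
    hU _ _ _, Fin.isValue, zero_ne_one, one_ne_zero, ↓reduceIte, mul_zero, zero_mul, add_zero,
    zero_add, map_zero, Fin.val_zero, Fin.val_one]
  push_cast
  ring

theorem collide_iterate_apply_zero_one (n : ℕ) :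
    ((collide q U)^[n] ρ) 0 1 = coherenceFactor q U ^ n * ρ 0 1 :=
  (Function.Semiconj.iterate_right (f := fun M : Matrix (Fin 2) (Fin 2) ℂ => M 0 1)
    (gb := (coherenceFactor q U * ·)) (collide_apply_zero_one hU) n ρ).trans
      (mul_left_iterate_apply _ _)

end Entries

variable (hUu : U ∈ unitaryGroup (Fin 2 × Fin 2) ℂ)
include hUu

theorem norm_apply_zero_zero : ‖U (0,0) (0,0)‖ = 1 := by
  refine (pow_eq_one_iff_of_nonneg (norm_nonneg _) two_ne_zero).mp ?_
  simpa [Fintype.sum_prod_type, hU _ _ _]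
    using sum_sq_norm_apply_left_of_mem_unitaryGroup hUu (0,0)

theorem norm_apply_one_one : ‖U (1,1) (1,1)‖ = 1 := by
  refine (pow_eq_one_iff_of_nonneg (norm_nonneg _) two_ne_zero).mp ?_
  simpa [Fintype.sum_prod_type, hU _ _ _]
    using sum_sq_norm_apply_left_of_mem_unitaryGroup hUu (1,1)

theorem sq_norm_apply_zero_one_zero_one : ‖U (0,1) (0,1)‖ ^ 2 = 1 - transitionProb U := by
  rw [transitionProb, eq_sub_iff_add_eq]
  simpa [Fintype.sum_prod_type, hU _ _ _]
    using sum_sq_norm_apply_right_of_mem_unitaryGroup hUu (0,1)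

theorem sq_norm_apply_one_zero_zero_one : ‖U (1,0) (0,1)‖ ^ 2 = transitionProb U := by
  have hcol : ‖U (0,1) (0,1)‖ ^ 2 + ‖U (1,0) (0,1)‖ ^ 2 = 1 := by
    simpa [Fintype.sum_prod_type, hU _ _ _]
      using sum_sq_norm_apply_left_of_mem_unitaryGroup hUu (0,1)
  linarith [sq_norm_apply_zero_one_zero_one hU hUu]

theorem sq_norm_apply_one_zero_one_zero : ‖U (1,0) (1,0)‖ ^ 2 = 1 - transitionProb U := by
  rw [transitionProb, eq_sub_iff_add_eq']
  simpa [Fintype.sum_prod_type, hU _ _ _]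
    using sum_sq_norm_apply_left_of_mem_unitaryGroup hUu (1,0)

theorem transitionProb_le_one : transitionProb U ≤ 1 := by
  linarith [sq_norm_apply_one_zero_one_zero hU hUu, sq_nonneg ‖U (1,0) (1,0)‖]

theorem trace_collide (hq : 1 + q ≠ 0) (ρ : Matrix (Fin 2) (Fin 2) ℂ) :
    (collide q U ρ).trace = ρ.trace := by
  have hqC : (1 + q : ℂ) ≠ 0 := by exact_mod_cast hq
  rw [trace_fin_two, trace_fin_two, collide_apply_zero_zero hU, collide_apply_one_one hU,
    norm_apply_zero_zero hU hUu, norm_apply_one_one hU hUu, sq_norm_apply_zero_one_zero_one hU hUu,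
    sq_norm_apply_one_zero_zero_one hU hUu, sq_norm_apply_one_zero_one_zero hU hUu, transitionProb]
  field_simp
  push_cast
  ring

theorem polarizationDeviation_collide (hq : 1 + q ≠ 0) (ρ : Matrix (Fin 2) (Fin 2) ℂ) :
    polarizationDeviation q (collide q U ρ)
      = (1 - transitionProb U) * polarizationDeviation q ρ := by
  have hqC : (1 + q : ℂ) ≠ 0 := by exact_mod_cast hq
  have h : collide q U ρ 0 0 - collide q U ρ 1 1
        - ((1 - q) / (1 + q) : ℝ) * (collide q U ρ).trace
      = ((1 - transitionProb U : ℝ) : ℂ)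
          * (ρ 0 0 - ρ 1 1 - ((1 - q) / (1 + q) : ℝ) * ρ.trace) := by
    rw [trace_collide hU hUu hq, trace_fin_two, collide_apply_zero_zero hU,
      collide_apply_one_one hU, norm_apply_zero_zero hU hUu, norm_apply_one_one hU hUu,
      sq_norm_apply_zero_one_zero_one hU hUu, sq_norm_apply_one_zero_zero_one hU hUu,
      sq_norm_apply_one_zero_one_zero hU hUu, transitionProb]
    push_cast
    field_simp
    ring
  rw [polarizationDeviation, polarizationDeviation, h, Complex.re_ofReal_mul]

theorem trace_collide_iterate (hq : 1 + q ≠ 0) (ρ : Matrix (Fin 2) (Fin 2) ℂ) (n : ℕ) :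
    ((collide q U)^[n] ρ).trace = ρ.trace := by
  rw [Function.Semiconj.iterate_right (f := trace) (gb := id) (trace_collide hU hUu hq) n ρ,
    Function.iterate_id, id]

theorem polarizationDeviation_collide_iterate (hq : 1 + q ≠ 0) (ρ : Matrix (Fin 2) (Fin 2) ℂ)
    (n : ℕ) : polarizationDeviation q ((collide q U)^[n] ρ)
      = (1 - transitionProb U) ^ n * polarizationDeviation q ρ := by
  rw [Function.Semiconj.iterate_right (gb := ((1 - transitionProb U) * ·))
    (polarizationDeviation_collide hU hUu hq) n ρ, mul_left_iterate_apply]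

theorem norm_coherenceFactor_mem_Icc (hq : 0 ≤ q) :
    ‖coherenceFactor q U‖ ∈ Set.Icc ((1 - q) / (1 + q) * √(1 - transitionProb U))
      √(1 - transitionProb U) := by
  have hd : ‖U (1,0) (1,0)‖ = √(1 - transitionProb U) := by
    rw [← sq_norm_apply_one_zero_one_zero hU hUu, Real.sqrt_sq (norm_nonneg _)]
  have ha : ‖U (0,1) (0,1)‖ = √(1 - transitionProb U) := by
    rw [← sq_norm_apply_zero_one_zero_one hU hUu, Real.sqrt_sq (norm_nonneg _)]
  set t := √(1 - transitionProb U)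
  set x := U (0,0) (0,0) * conj (U (1,0) (1,0))
  set y := (q : ℂ) * (U (0,1) (0,1) * conj (U (1,1) (1,1)))
  have hx : ‖x‖ = t := by
    rw [norm_mul, Complex.norm_conj, norm_apply_zero_zero hU hUu, one_mul, hd]
  have hy : ‖y‖ = q * t := by
    rw [norm_mul, norm_mul, Complex.norm_conj, norm_apply_one_one hU hUu, mul_one,
      Complex.norm_of_nonneg hq, ha]
  have hq1 : 0 < 1 + q := by linarith
  rw [coherenceFactor, norm_div, Complex.norm_of_nonneg hq1.le, Set.mem_Icc,
    div_mul_eq_mul_div, div_le_div_iff_of_pos_right hq1, div_le_iff₀ hq1]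
  constructor
  · calc (1 - q) * t = ‖x‖ - ‖-y‖ := by rw [norm_neg, hx, hy]; ring
      _ ≤ ‖x + y‖ := by simpa only [sub_neg_eq_add] using norm_sub_norm_le x (-y)
  · calc ‖x + y‖ ≤ ‖x‖ + ‖y‖ := norm_add_le _ _
      _ = t * (1 + q) := by rw [hx, hy]; ring

end QubitCollision

open QubitCollision

theorem qubit_cone_necessity_general
    (β E : ℝ) (hβ : 0 < β) (hE : 0 < E) (q : ℝ) (hq : q = Real.exp (-β * E))
    (zτ : ℝ) (hzτ : zτ = (1 - q) / (1 + q))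
    (ρ : Matrix (Fin 2) (Fin 2) ℂ) (htr : ρ.trace = 1)
    (hzρ : (ρ 0 0).re - (ρ 1 1).re ≠ zτ)
    (U : Matrix (Fin 2 × Fin 2) (Fin 2 × Fin 2) ℂ)
    (hU : U ∈ Matrix.unitaryGroup (Fin 2 × Fin 2) ℂ)
    (hcomm : U * Matrix.diagonal
        (fun ab : Fin 2 × Fin 2 => ((((ab.1 : ℕ) + (ab.2 : ℕ)) * E : ℝ) : ℂ))
      = Matrix.diagonal
        (fun ab : Fin 2 × Fin 2 => ((((ab.1 : ℕ) + (ab.2 : ℕ)) * E : ℝ) : ℂ)) * U)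
    (N : ℕ)
    (σ : Matrix (Fin 2) (Fin 2) ℂ) (hσ : σ = (collide q U)^[N] ρ)
    (r : ℝ) (hr : r = (((σ 0 0).re - (σ 1 1).re) - zτ) / (((ρ 0 0).re - (ρ 1 1).re) - zτ)) :
    0 ≤ r ∧ r ≤ 1 ∧
    zτ ^ N * ‖ρ 0 1‖ * Real.sqrt r ≤ ‖σ 0 1‖ ∧
    ‖σ 0 1‖ ≤ ‖ρ 0 1‖ * Real.sqrt r := by
  have hq0 : 0 ≤ q := hq ▸ (Real.exp_pos _).le
  have hq1 : q ≤ 1 := hq ▸ Real.exp_le_one_iff.mpr (by nlinarith)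
  have hzτ0 : 0 ≤ zτ := hzτ ▸ div_nonneg (by linarith) (by linarith)
  have hexc := isExcitationPreserving_of_commute hE.ne' hcomm
  have hq_ne : 1 + q ≠ 0 := by linarith
  set s := transitionProb U
  have hs1 : 0 ≤ 1 - s := sub_nonneg.mpr (transitionProb_le_one hexc hU)
  have hrs : r = (1 - s) ^ N := by
    have hdev := polarizationDeviation_collide_iterate hexc hU hq_ne ρ N
    rw [← hσ, polarizationDeviation_of_trace_eq_one htr, polarizationDeviation_of_trace_eq_one
      (by rw [hσ, trace_collide_iterate hexc hU hq_ne, htr]), ← hzτ] at hdev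
    rw [hr, hdev, mul_div_cancel_right₀ _ (sub_ne_zero.mpr hzρ)]
  have hsqrt : √r = √(1 - s) ^ N := by
    rw [hrs, Real.sqrt_eq_iff_eq_sq (by positivity) (by positivity), ← pow_mul, mul_comm,
      pow_mul, Real.sq_sqrt hs1]
  have hσ01 : ‖σ 0 1‖ = ‖coherenceFactor q U‖ ^ N * ‖ρ 0 1‖ := by
    rw [hσ, collide_iterate_apply_zero_one hexc, norm_mul, norm_pow]
  obtain ⟨hlow, hupp⟩ := norm_coherenceFactor_mem_Icc hexc hU hq0
  rw [← hzτ] at hlow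
  refine ⟨hrs ▸ by positivity, hrs ▸ pow_le_one₀ hs1 (sub_le_self _ (sq_nonneg _)), ?_, ?_⟩
  · rw [hσ01, hsqrt, mul_right_comm, ← mul_pow]
    gcongr
  · rw [hσ01, hsqrt, mul_comm]
    gcongr

/-- Necessity direction of the paper's Theorem 1, Eq. (cone_qubit): for z(ρ) ≠ z_τ, the
N-collision output satisfies r = (z(σ)−z_τ)/(z(ρ)−z_τ) ∈ [0,1] and
z_τ^N·η(ρ)·√r ≤ η(σ) ≤ η(ρ)·√r. -/
theorem qubit_cone_necessity
    (β E : ℝ) (hβ : 0 < β) (hE : 0 < E) (q : ℝ) (hq : q = Real.exp (-β * E))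
    (zτ : ℝ) (hzτ : zτ = (1 - q) / (1 + q))
    (ρ : Matrix (Fin 2) (Fin 2) ℂ) (hρ : ρ.PosSemidef) (htr : ρ.trace = 1)
    (hzρ : (ρ 0 0).re - (ρ 1 1).re ≠ zτ)
    (U : Matrix (Fin 2 × Fin 2) (Fin 2 × Fin 2) ℂ)
    (hU : U ∈ Matrix.unitaryGroup (Fin 2 × Fin 2) ℂ)
    (hcomm : U * Matrix.diagonal
        (fun ab : Fin 2 × Fin 2 => ((((ab.1 : ℕ) + (ab.2 : ℕ)) * E : ℝ) : ℂ))
      = Matrix.diagonal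
        (fun ab : Fin 2 × Fin 2 => ((((ab.1 : ℕ) + (ab.2 : ℕ)) * E : ℝ) : ℂ)) * U)
    (N : ℕ) (hN : 1 ≤ N)
    (σ : Matrix (Fin 2) (Fin 2) ℂ) (hσ : σ = (collide q U)^[N] ρ)
    (r : ℝ) (hr : r = (((σ 0 0).re - (σ 1 1).re) - zτ) / (((ρ 0 0).re - (ρ 1 1).re) - zτ)) :
    0 ≤ r ∧ r ≤ 1 ∧
    zτ ^ N * ‖ρ 0 1‖ * Real.sqrt r ≤ ‖σ 0 1‖ ∧
    ‖σ 0 1‖ ≤ ‖ρ 0 1‖ * Real.sqrt r :=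
  qubit_cone_necessity_general β E hβ hE q hq zτ hzτ ρ htr hzρ U hU hcomm N σ hσ r hr
end

section
/- Let β > 0, E > 0, q = exp(−β·E), z_τ = (1−q)/(1+q). Let ρ be a 2×2 density matrix with z(ρ) ≠ z_τ, and let N ≥ 1. Suppose z' ∈ ℝ and η' ≥ 0 satisfy r := (z' − z_τ)/(z(ρ) − z_τ) ∈ [0, 1] and z_τ^N · η(ρ) · √r ≤ η' ≤ η(ρ) · √r. Then there exists an energy-preserving unitary U indexed by (Fin 2) × (Fin 2) such that σ = T_U^N(ρ) satisfies z(σ) = z' and η(σ) = η'. (Sufficiency direction of the paper's Theorem 1: every point of the cone Eq. (cone_qubit) is reachable by N identical collisions.) -/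
open scoped BigOperators
open Matrix
open scoped ComplexOrder

/-!
The unitary is the identity on `|00⟩`, a phase `w` on `|11⟩` and a rotation `[[c, -s], [s, c]]`
on the degenerate pair `|01⟩, |10⟩`, so it conserves energy. One collision contracts
`z - z_τ` by `c²` and multiplies `ρ₀₁` by `c (p₀ + w̄ p₁)`, where `p₀ = 1/(1+q)`, `p₁ = q/(1+q)`.
As `w` runs over the unit circle, `|p₀ + w̄ p₁|` sweeps `[p₀ - p₁, p₀ + p₁] = [z_τ, 1]`. Hence
choosing `c ^ N = √r` fixes `z` after `N` collisions, and the remaining factor `m ^ N` with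
`m ∈ [z_τ, 1]` reaches every coherence in the cone; both choices come from the intermediate
value theorem.
-/

open Set
open scoped Kronecker

theorem exists_mem_Icc_pow_mul_eq {a k y : ℝ} (n : ℕ) (ha : a ≤ 1) (hy : y ∈ Icc (a ^ n * k) k) :
    ∃ x ∈ Icc a 1, x ^ n * k = y := by
  simpa using intermediate_value_Icc ha (by fun_prop : ContinuousOn (fun x : ℝ => x ^ n * k) _)
    (by simpa using hy)

theorem Complex.exists_norm_eq_one_norm_add_mul_eq {a b m : ℝ} (ha : 0 ≤ a) (hb : 0 ≤ b)
    (hm : m ∈ Icc |a - b| (a + b)) : ∃ w : ℂ, ‖w‖ = 1 ∧ ‖(a : ℂ) + w * b‖ = m := by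
  have hcont : ContinuousOn (fun θ : ℝ => ‖(a : ℂ) + exp (θ * I) * b‖) (Icc 0 Real.pi) := by
    fun_prop
  obtain ⟨θ, -, hθ⟩ := intermediate_value_Icc' Real.pi_pos.le hcont (by
    simpa [← ofReal_neg, ← ofReal_add, norm_real, abs_of_nonneg (add_nonneg ha hb),
      sub_eq_add_neg] using hm)
  exact ⟨exp (θ * I), norm_exp_ofReal_mul_I θ, hθ⟩

theorem Function.Semiconj.apply_iterate_eq_pow_mul {M α : Type*} [Monoid M] {g : α → M}
    {f : α → α} {a : M} (h : Function.Semiconj g f (a * ·)) (n : ℕ) (x : α) :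
    g (f^[n] x) = a ^ n * g x := by
  rw [(h.iterate_right n).eq, mul_left_iterate_apply]

theorem trace_collide {q : ℝ} (hq : 1 + q ≠ 0) {U : Matrix (Fin 2 × Fin 2) (Fin 2 × Fin 2) ℂ}
    (hU : U ∈ unitaryGroup (Fin 2 × Fin 2) ℂ) (ρ : Matrix (Fin 2) (Fin 2) ℂ) :
    (collide q U ρ).trace = ρ.trace := by
  have hτ : (diagonal fun j : Fin 2 => ((q ^ (j : ℕ) / (1 + q) : ℝ) : ℂ)).trace = 1 := by
    rw [trace_diagonal, Fin.sum_univ_two, ← Complex.ofReal_add, ← add_div]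
    simp [div_self hq]
  have hUU : Uᴴ * U = 1 := (mem_unitaryGroup_iff').1 hU
  calc (collide q U ρ).trace
      = (U * (ρ ⊗ₖ diagonal fun j : Fin 2 => ((q ^ (j : ℕ) / (1 + q) : ℝ) : ℂ)) * Uᴴ).trace := by
        simp [collide, trace, Fintype.sum_prod_type]
    _ = ρ.trace := by
        rw [trace_mul_cycle, hUU, one_mul, trace_kronecker, hτ, mul_one]

theorem trace_iterate_collide {q : ℝ} (hq : 1 + q ≠ 0)
    {U : Matrix (Fin 2 × Fin 2) (Fin 2 × Fin 2) ℂ} (hU : U ∈ unitaryGroup (Fin 2 × Fin 2) ℂ)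
    (n : ℕ) (ρ : Matrix (Fin 2) (Fin 2) ℂ) :
    ((collide q U)^[n] ρ).trace = ρ.trace := by
  induction n with
  | zero => rfl
  | succ n ih => rw [Function.iterate_succ_apply', trace_collide hq hU, ih]

noncomputable def partialSwap (c s : ℝ) (w : ℂ) : Matrix (Fin 2 × Fin 2) (Fin 2 × Fin 2) ℂ :=
  Matrix.of fun
    | (0, 0), (0, 0) => 1
    | (0, 1), (0, 1) => c
    | (0, 1), (1, 0) => -s
    | (1, 0), (0, 1) => s
    | (1, 0), (1, 0) => c
    | (1, 1), (1, 1) => w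
    | _, _ => 0

theorem partialSwap_mem_unitaryGroup {c s : ℝ} (hcs : c ^ 2 + s ^ 2 = 1) {w : ℂ}
    (hw : ‖w‖ = 1) : partialSwap c s w ∈ unitaryGroup (Fin 2 × Fin 2) ℂ := by
  have hw' : w * starRingEnd ℂ w = 1 := by
    rw [Complex.mul_conj, Complex.normSq_eq_norm_sq, hw]; simp
  have hcs' : (c : ℂ) ^ 2 + (s : ℂ) ^ 2 = 1 := by exact_mod_cast hcs
  rw [mem_unitaryGroup_iff]
  ext ⟨a, j⟩ ⟨b, k⟩
  fin_cases a <;> fin_cases j <;> fin_cases b <;> fin_cases k <;>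
    simp [partialSwap, mul_apply, Fintype.sum_prod_type, hw'] <;> grind

theorem partialSwap_commute_diagonal (c s : ℝ) (w : ℂ) {d : Fin 2 × Fin 2 → ℂ}
    (hd : d (0, 1) = d (1, 0)) : Commute (partialSwap c s w) (diagonal d) := by
  ext ⟨a, j⟩ ⟨b, k⟩
  rw [mul_diagonal, diagonal_mul]
  fin_cases a <;> fin_cases j <;> fin_cases b <;> fin_cases k <;> simp [partialSwap, hd, mul_comm]

theorem collide_partialSwap_apply_zero_one (q c s : ℝ) (w : ℂ) (ρ : Matrix (Fin 2) (Fin 2) ℂ) :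
    collide q (partialSwap c s w) ρ 0 1
      = c * ((1 / (1 + q) : ℝ) + star w * (q / (1 + q) : ℝ)) * ρ 0 1 := by
  simp [collide, partialSwap, mul_apply, kroneckerMap_apply, Fintype.sum_prod_type]
  ring

theorem iterate_collide_partialSwap_apply_zero_one (q c s : ℝ) (w : ℂ) (n : ℕ)
    (ρ : Matrix (Fin 2) (Fin 2) ℂ) :
    ((collide q (partialSwap c s w))^[n] ρ) 0 1
      = (c * ((1 / (1 + q) : ℝ) + star w * (q / (1 + q) : ℝ))) ^ n * ρ 0 1 :=
  Function.Semiconj.apply_iterate_eq_pow_mul (g := fun σ : Matrix (Fin 2) (Fin 2) ℂ => σ 0 1)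
    (collide_partialSwap_apply_zero_one q c s w) n ρ

/-- `z(ρ) - z_τ tr ρ`: the distance of the polarization from its Gibbs value, made linear in `ρ`. -/
noncomputable def polarizationGap (q : ℝ) (ρ : Matrix (Fin 2) (Fin 2) ℂ) : ℂ :=
  ρ 0 0 - ρ 1 1 - ((1 - q) / (1 + q) : ℝ) * ρ.trace

theorem polarizationGap_collide_partialSwap {q : ℝ} (hq : 1 + q ≠ 0) {c s : ℝ}
    (hcs : c ^ 2 + s ^ 2 = 1) {w : ℂ} (hw : ‖w‖ = 1) (ρ : Matrix (Fin 2) (Fin 2) ℂ) :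
    polarizationGap q (collide q (partialSwap c s w) ρ) = c ^ 2 * polarizationGap q ρ := by
  have hw' : w * starRingEnd ℂ w = 1 := by
    rw [Complex.mul_conj, Complex.normSq_eq_norm_sq, hw]; simp
  have hcs' : (c : ℂ) ^ 2 + (s : ℂ) ^ 2 = 1 := by exact_mod_cast hcs
  have hq' : (1 : ℂ) + q ≠ 0 := by exact_mod_cast hq
  simp [polarizationGap, trace_fin_two, collide, partialSwap, mul_apply, kroneckerMap_apply,
    Fintype.sum_prod_type]
  field_simp
  linear_combination 2 * (q : ℂ) * (ρ 1 1 - ρ 0 0) * hcs' - 2 * (q : ℂ) * ρ 1 1 * hw'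

theorem polarization_iterate_collide_partialSwap {q : ℝ} (hq : 1 + q ≠ 0) {c s : ℝ}
    (hcs : c ^ 2 + s ^ 2 = 1) {w : ℂ} (hw : ‖w‖ = 1) {ρ : Matrix (Fin 2) (Fin 2) ℂ}
    (htr : ρ.trace = 1) (n : ℕ) :
    (((collide q (partialSwap c s w))^[n] ρ) 0 0).re
        - (((collide q (partialSwap c s w))^[n] ρ) 1 1).re - (1 - q) / (1 + q)
      = (c ^ 2) ^ n * ((ρ 0 0).re - (ρ 1 1).re - (1 - q) / (1 + q)) := by
  have hgap := Function.Semiconj.apply_iterate_eq_pow_mul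
    (polarizationGap_collide_partialSwap hq hcs hw) n ρ
  rw [polarizationGap, polarizationGap,
    trace_iterate_collide hq (partialSwap_mem_unitaryGroup hcs hw), htr] at hgap
  simpa only [mul_one, Complex.sub_re, Complex.ofReal_re, ← Complex.ofReal_pow,
    Complex.re_ofReal_mul] using congrArg Complex.re hgap

theorem qubit_cone_sufficiency_general
    (β E : ℝ) (hβ : 0 < β) (hE : 0 < E) (q : ℝ) (hq : q = Real.exp (-β * E))
    (zτ : ℝ) (hzτ : zτ = (1 - q) / (1 + q))
    (ρ : Matrix (Fin 2) (Fin 2) ℂ) (htr : ρ.trace = 1)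
    (hzρ : (ρ 0 0).re - (ρ 1 1).re ≠ zτ)
    (N : ℕ) (hN : 1 ≤ N)
    (z' η' : ℝ)
    (r : ℝ) (hr : r = (z' - zτ) / (((ρ 0 0).re - (ρ 1 1).re) - zτ))
    (hr0 : 0 ≤ r) (hr1 : r ≤ 1)
    (hlow : zτ ^ N * ‖ρ 0 1‖ * Real.sqrt r ≤ η')
    (hhigh : η' ≤ ‖ρ 0 1‖ * Real.sqrt r) :
    ∃ U : Matrix (Fin 2 × Fin 2) (Fin 2 × Fin 2) ℂ,
      U ∈ Matrix.unitaryGroup (Fin 2 × Fin 2) ℂ ∧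
      U * Matrix.diagonal
          (fun ab : Fin 2 × Fin 2 => ((((ab.1 : ℕ) + (ab.2 : ℕ)) * E : ℝ) : ℂ))
        = Matrix.diagonal
          (fun ab : Fin 2 × Fin 2 => ((((ab.1 : ℕ) + (ab.2 : ℕ)) * E : ℝ) : ℂ)) * U ∧
      ((((collide q U)^[N] ρ) 0 0).re - (((collide q U)^[N] ρ) 1 1).re = z' ∧
       ‖((collide q U)^[N] ρ) 0 1‖ = η') := by
  have hq0 : 0 < q := hq ▸ Real.exp_pos _
  have hq1 : q < 1 := hq ▸ Real.exp_lt_one_iff.2 (by nlinarith)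
  have hq' : 1 + q ≠ 0 := by positivity
  have hzτ_eq : zτ = 1 / (1 + q) - q / (1 + q) := by rw [hzτ, sub_div]
  have hzτ0 : 0 ≤ zτ := hzτ ▸ div_nonneg (by linarith) (by linarith)
  have hsum : 1 / (1 + q) + q / (1 + q) = 1 := by rw [← add_div, div_self hq']
  have hzτ1 : zτ ≤ 1 := by linarith [show 0 ≤ q / (1 + q) by positivity]
  obtain ⟨c, ⟨hc0, hc1⟩, hcN⟩ := exists_mem_Icc_pow_mul_eq N zero_le_one (k := 1) (y := √r)
    ⟨by simp [zero_pow (by omega : N ≠ 0)], by simpa using hr1⟩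
  rw [mul_one] at hcN
  obtain ⟨m, hm, hmN⟩ := exists_mem_Icc_pow_mul_eq N hzτ1 (k := √r * ‖ρ 0 1‖) (y := η')
    ⟨by linarith, by linarith⟩
  obtain ⟨w, hw, hwm⟩ := Complex.exists_norm_eq_one_norm_add_mul_eq (m := m)
    (by positivity : 0 ≤ 1 / (1 + q)) (by positivity : 0 ≤ q / (1 + q))
    (by rwa [← hzτ_eq, abs_of_nonneg hzτ0, hsum])
  have hcs : c ^ 2 + √(1 - c ^ 2) ^ 2 = 1 := by
    rw [Real.sq_sqrt (by nlinarith)]; ring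
  have hw' : ‖star w‖ = 1 := by rwa [norm_star]
  refine ⟨partialSwap c √(1 - c ^ 2) (star w), partialSwap_mem_unitaryGroup hcs hw',
    partialSwap_commute_diagonal _ _ _ (by simp [add_comm]), ?_, ?_⟩
  · have hz := polarization_iterate_collide_partialSwap hq' hcs hw' htr N
    have hc2N : (c ^ 2) ^ N = r := by rw [← pow_mul, mul_comm, pow_mul, hcN, Real.sq_sqrt hr0]
    rw [← hzτ, hc2N, hr, div_mul_cancel₀ _ (sub_ne_zero.2 hzρ)] at hz
    linarith
  · rw [iterate_collide_partialSwap_apply_zero_one, star_star, norm_mul, norm_pow, norm_mul, hwm,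
      Complex.norm_of_nonneg hc0, mul_pow, hcN, ← hmN]
    ring

/-- Sufficiency direction of the paper's Theorem 1: every point of the cone Eq. (cone_qubit)
is reachable by N identical energy-preserving collisions. -/
theorem qubit_cone_sufficiency
    (β E : ℝ) (hβ : 0 < β) (hE : 0 < E) (q : ℝ) (hq : q = Real.exp (-β * E))
    (zτ : ℝ) (hzτ : zτ = (1 - q) / (1 + q))
    (ρ : Matrix (Fin 2) (Fin 2) ℂ) (hρ : ρ.PosSemidef) (htr : ρ.trace = 1)
    (hzρ : (ρ 0 0).re - (ρ 1 1).re ≠ zτ)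
    (N : ℕ) (hN : 1 ≤ N)
    (z' η' : ℝ) (hη' : 0 ≤ η')
    (r : ℝ) (hr : r = (z' - zτ) / (((ρ 0 0).re - (ρ 1 1).re) - zτ))
    (hr0 : 0 ≤ r) (hr1 : r ≤ 1)
    (hlow : zτ ^ N * ‖ρ 0 1‖ * Real.sqrt r ≤ η')
    (hhigh : η' ≤ ‖ρ 0 1‖ * Real.sqrt r) :
    ∃ U : Matrix (Fin 2 × Fin 2) (Fin 2 × Fin 2) ℂ,
      U ∈ Matrix.unitaryGroup (Fin 2 × Fin 2) ℂ ∧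
      U * Matrix.diagonal
          (fun ab : Fin 2 × Fin 2 => ((((ab.1 : ℕ) + (ab.2 : ℕ)) * E : ℝ) : ℂ))
        = Matrix.diagonal
          (fun ab : Fin 2 × Fin 2 => ((((ab.1 : ℕ) + (ab.2 : ℕ)) * E : ℝ) : ℂ)) * U ∧
      ((((collide q U)^[N] ρ) 0 0).re - (((collide q U)^[N] ρ) 1 1).re = z' ∧
       ‖((collide q U)^[N] ρ) 0 1‖ = η') :=
  qubit_cone_sufficiency_general β E hβ hE q hq zτ hzτ ρ htr hzρ N hN z' η' r hr hr0 hr1 hlow hhigh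
end

section
/- Let β > 0, E > 0, q = exp(−β·E), and τ_j = q^j/(1+q+q²) for j = 0,1,2. For every probability distribution p on Fin 3 there exists a unitary complex matrix U indexed by (Fin 3) × (Fin 3), commuting with the diagonal matrix H_{(k,j)} = (k+j)·E (namely the permutation that swaps |01⟩ ↔ |10⟩, cyclically permutes |02⟩ → |20⟩ → |11⟩ → |02⟩, and fixes all other basis states), such that the output populations are exactly p'_0 = τ_0 + (τ_1·p_1 − τ_0·p_2), p'_1 = τ_1·p_0 + τ_2·p_1 + τ_0·p_2, p'_2 = p_2 − (τ_0·p_2 − τ_2·p_0). (Achievability of the extreme point A₄ of the paper's single-collision qutrit cone.) -/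
/-!
An energy-preserving permutation of the joint basis gives a unitary commuting with the joint
Hamiltonian, and conjugating the diagonal input state by it merely permutes the diagonal entries.
For the permutation realising A₄ the output populations are therefore sums of products `p k * τ j`,
which match the claimed ones after using `∑ p = 1` and `∑ τ = 1`.
-/

open scoped BigOperators
open Matrix Equiv

namespace Matrix

variable {n R : Type*} [Fintype n] [DecidableEq n] (σ : Perm n)

lemma permMatrix_mem_unitaryGroup [CommRing R] [StarRing R] :
    σ.permMatrix R ∈ unitaryGroup n R := by
  rw [mem_unitaryGroup_iff, star_eq_conjTranspose, conjTranspose_permMatrix, ← permMatrix_mul,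
    inv_mul_cancel, permMatrix_one]

lemma permMatrix_mul_diagonal_mul_conjTranspose [NonAssocSemiring R] [StarRing R] (d : n → R) :
    σ.permMatrix R * diagonal d * (σ.permMatrix R)ᴴ = diagonal (d ∘ σ) := by
  rw [conjTranspose_permMatrix, PEquiv.toMatrix_toPEquiv_mul, PEquiv.mul_toMatrix_toPEquiv,
    submatrix_submatrix, Perm.inv_def, symm_symm]
  exact submatrix_diagonal_equiv d σ

lemma permMatrix_commute_diagonal [CommRing R] [StarRing R] {d : n → R}
    (hd : ∀ i, d (σ i) = d i) : Commute (σ.permMatrix R) (diagonal d) := by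
  have hconj := permMatrix_mul_diagonal_mul_conjTranspose σ d
  rw [show d ∘ σ = d from funext hd] at hconj
  calc σ.permMatrix R * diagonal d
      = σ.permMatrix R * diagonal d * ((σ.permMatrix R)ᴴ * σ.permMatrix R) := by
        rw [← star_eq_conjTranspose, (permMatrix_mem_unitaryGroup σ).1, Matrix.mul_one]
    _ = diagonal d * σ.permMatrix R := by rw [← Matrix.mul_assoc, hconj]

end Matrix

lemma sum_qutrit_gibbs_eq_one (q : ℝ) : ∑ j : Fin 3, q ^ (j : ℕ) / (1 + q + q ^ 2) = 1 := by
  have : 1 + q + q ^ 2 ≠ 0 := by nlinarith [sq_nonneg (q + 1 / 2)]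
  rw [← Finset.sum_div, Fin.sum_univ_three]
  simpa using div_self this

/-- `σ.permMatrix` maps `|σ i⟩` to `|i⟩`, so the collision acts by `σ⁻¹`: it swaps `|01⟩ ↔ |10⟩`
and cycles `|02⟩ → |20⟩ → |11⟩ → |02⟩`. -/
def qutritA4Perm : Perm (Fin 3 × Fin 3) :=
  swap (0, 1) (1, 0) * swap (0, 2) (1, 1) * swap (1, 1) (2, 0)

lemma qutritA4Perm_energy (i : Fin 3 × Fin 3) :
    ((qutritA4Perm i).1 : ℕ) + (qutritA4Perm i).2 = i.1 + i.2 := by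
  revert i; decide

theorem qutrit_extreme_point_A4_general
    (E : ℝ) (q : ℝ)
    (τ : Fin 3 → ℝ) (hτ : ∀ j, τ j = q ^ (j : ℕ) / (1 + q + q ^ 2))
    (p : Fin 3 → ℝ) (hp1 : ∑ k, p k = 1) :
    ∃ U : Matrix (Fin 3 × Fin 3) (Fin 3 × Fin 3) ℂ,
      U ∈ Matrix.unitaryGroup (Fin 3 × Fin 3) ℂ ∧
      U * Matrix.diagonal
          (fun kj : Fin 3 × Fin 3 => ((((kj.1 : ℕ) + (kj.2 : ℕ)) * E : ℝ) : ℂ))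
        = Matrix.diagonal
          (fun kj : Fin 3 × Fin 3 => ((((kj.1 : ℕ) + (kj.2 : ℕ)) * E : ℝ) : ℂ)) * U ∧
      (∑ j : Fin 3,
          (U * Matrix.diagonal
              (fun kj : Fin 3 × Fin 3 => ((p kj.1 * τ kj.2 : ℝ) : ℂ)) * Uᴴ)
            ((0 : Fin 3), j) ((0 : Fin 3), j)
        = ((τ 0 + (τ 1 * p 1 - τ 0 * p 2) : ℝ) : ℂ)) ∧
      (∑ j : Fin 3,
          (U * Matrix.diagonal
              (fun kj : Fin 3 × Fin 3 => ((p kj.1 * τ kj.2 : ℝ) : ℂ)) * Uᴴ)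
            ((1 : Fin 3), j) ((1 : Fin 3), j)
        = ((τ 1 * p 0 + τ 2 * p 1 + τ 0 * p 2 : ℝ) : ℂ)) ∧
      (∑ j : Fin 3,
          (U * Matrix.diagonal
              (fun kj : Fin 3 × Fin 3 => ((p kj.1 * τ kj.2 : ℝ) : ℂ)) * Uᴴ)
            ((2 : Fin 3), j) ((2 : Fin 3), j)
        = ((p 2 - (τ 0 * p 2 - τ 2 * p 0) : ℝ) : ℂ)) := by
  have hpsum : p 0 + p 1 + p 2 = 1 := by simpa [Fin.sum_univ_three] using hp1
  have hτsum : τ 0 + τ 1 + τ 2 = 1 := by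
    simpa [Fin.sum_univ_three, ← hτ] using sum_qutrit_gibbs_eq_one q
  refine ⟨qutritA4Perm.permMatrix ℂ, permMatrix_mem_unitaryGroup _,
    permMatrix_commute_diagonal _ fun i => by simp only [← Nat.cast_add, qutritA4Perm_energy],
    ?_, ?_, ?_⟩ <;>
  simp only [permMatrix_mul_diagonal_mul_conjTranspose, diagonal_apply_eq, Function.comp_apply,
    Fin.sum_univ_three] <;>
  simp only [qutritA4Perm, Perm.coe_mul, Function.comp_apply, swap_apply_def, Prod.mk.injEq,
    Fin.reduceEq, zero_ne_one, one_ne_zero, and_self, and_true, and_false, ↓reduceIte] <;>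
  norm_cast
  · linear_combination τ 0 * hpsum
  · ring
  · linear_combination p 2 * hτsum

/-- Achievability of the extreme point A₄ of the paper's single-collision qutrit cone: the
energy-preserving permutation swapping |01⟩ ↔ |10⟩ and cyclically permuting
|02⟩ → |20⟩ → |11⟩ → |02⟩ produces exactly the stated output populations. -/
theorem qutrit_extreme_point_A4
    (β E : ℝ) (hβ : 0 < β) (hE : 0 < E) (q : ℝ) (hq : q = Real.exp (-β * E))
    (τ : Fin 3 → ℝ) (hτ : ∀ j, τ j = q ^ (j : ℕ) / (1 + q + q ^ 2))
    (p : Fin 3 → ℝ) (hp0 : ∀ k, 0 ≤ p k) (hp1 : ∑ k, p k = 1) :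
    ∃ U : Matrix (Fin 3 × Fin 3) (Fin 3 × Fin 3) ℂ,
      U ∈ Matrix.unitaryGroup (Fin 3 × Fin 3) ℂ ∧
      U * Matrix.diagonal
          (fun kj : Fin 3 × Fin 3 => ((((kj.1 : ℕ) + (kj.2 : ℕ)) * E : ℝ) : ℂ))
        = Matrix.diagonal
          (fun kj : Fin 3 × Fin 3 => ((((kj.1 : ℕ) + (kj.2 : ℕ)) * E : ℝ) : ℂ)) * U ∧
      (∑ j : Fin 3,
          (U * Matrix.diagonal
              (fun kj : Fin 3 × Fin 3 => ((p kj.1 * τ kj.2 : ℝ) : ℂ)) * Uᴴ)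
            ((0 : Fin 3), j) ((0 : Fin 3), j)
        = ((τ 0 + (τ 1 * p 1 - τ 0 * p 2) : ℝ) : ℂ)) ∧
      (∑ j : Fin 3,
          (U * Matrix.diagonal
              (fun kj : Fin 3 × Fin 3 => ((p kj.1 * τ kj.2 : ℝ) : ℂ)) * Uᴴ)
            ((1 : Fin 3), j) ((1 : Fin 3), j)
        = ((τ 1 * p 0 + τ 2 * p 1 + τ 0 * p 2 : ℝ) : ℂ)) ∧
      (∑ j : Fin 3,
          (U * Matrix.diagonal
              (fun kj : Fin 3 × Fin 3 => ((p kj.1 * τ kj.2 : ℝ) : ℂ)) * Uᴴ)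
            ((2 : Fin 3), j) ((2 : Fin 3), j)
        = ((p 2 - (τ 0 * p 2 - τ 2 * p 0) : ℝ) : ℂ)) :=
  qutrit_extreme_point_A4_general E q τ hτ p hp1
end
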